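/- arXiv:1204.2071 — 5 statements merged into one kernel-verified Lean document; each statement's English description precedes it below -/
import Mathlib

section
/- No power of a prime is a census-taker number: if N = p^n with p prime and n a positive integer, then N is not a census-taker number. -/
/-- `s` and `t` form a pair of "mysterious triples" for `N`: both are unordered
triples (multisets of size 3) of positive integers with product `N`, equal sums,
and the triples are distinct. -/
def MysteriousPair (N : ℕ) (s t : Multiset ℕ) : Prop :=
  Multiset.card s = 3 ∧ Multiset.card t = 3 ∧
  (∀ x ∈ s, 0 < x) ∧ (∀ x ∈ t, 0 < x) ∧
  s.prod = N ∧ t.prod = N ∧ s.sum = t.sum ∧ s ≠ t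

/-- `N` is a census-taker number: there is exactly one (unordered) pair of
distinct unordered triples of positive integers with product `N` and equal sums. -/
def IsCTN (N : ℕ) : Prop :=
  (∃ s t, MysteriousPair N s t) ∧
  ∀ s t s' t', MysteriousPair N s t → MysteriousPair N s' t' →
    (s = s' ∧ t = t') ∨ (s = t' ∧ t = s')

-- base case for pairs: 1 + p^c = p^e + p^f, e ≤ f
lemma pairBase {p : ℕ} (hp : p.Prime) (c e f : ℕ) (hef : e ≤ f)
    (h : 1 + p^c = p^e + p^f) : 0 = e ∧ c = f := by
  have hp1 : 1 < p := hp.one_lt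
  cases e with
  | zero =>
    simp only [pow_zero] at h
    have : p ^ c = p ^ f := by omega
    exact ⟨rfl, Nat.pow_right_injective hp.two_le this⟩
  | succ e =>
    exfalso
    have hf : 1 ≤ f := by omega
    have hd1 : p ∣ p ^ (e+1) := dvd_pow_self p (Nat.succ_ne_zero e)
    have hd2 : p ∣ p ^ f := dvd_pow_self p (by omega)
    rcases Nat.eq_zero_or_pos c with hc | hc
    · subst hc
      have h1 : p ≤ p ^ (e+1) := Nat.le_self_pow (Nat.succ_ne_zero e) p
      have h2 : p ≤ p ^ f := Nat.le_self_pow (by omega) p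
      simp only [pow_zero] at h
      omega
    · have hd3 : p ∣ p ^ c := dvd_pow_self p (by omega)
      have : p ∣ 1 := by
        have : p ∣ 1 + p ^ c := by
          rw [h]; exact dvd_add hd1 hd2
        exact (Nat.dvd_add_right hd3).mp (by rwa [add_comm] at this)
      have := Nat.dvd_one.mp this; omega

lemma pairLem {p : ℕ} (hp : p.Prime) :
    ∀ b c e f : ℕ, b ≤ c → e ≤ f → p^b + p^c = p^e + p^f → b = e ∧ c = f := by
  intro b
  induction b with
  | zero =>
    intro c e f hbc hef h
    simpa using pairBase hp c e f hef (by simpa using h)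
  | succ b ih =>
    intro c e f hbc hef h
    cases e with
    | zero =>
      have := pairBase hp f (b+1) c hbc (by simpa using h.symm)
      omega
    | succ e =>
      obtain ⟨c, rfl⟩ : ∃ c', c = c'+1 := ⟨c-1, by omega⟩
      obtain ⟨f, rfl⟩ : ∃ f', f = f'+1 := ⟨f-1, by omega⟩
      have hcan : p ^ b + p ^ c = p ^ e + p ^ f := by
        have h' : (p ^ b + p ^ c) * p = (p ^ e + p ^ f) * p := by
          simp only [pow_succ] at h; ring_nf at h ⊢; linarith
        exact Nat.eq_of_mul_eq_mul_right hp.pos h'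
      have := ih c e f (by omega) (by omega) hcan
      omega

-- base case for triples: 1 + p^b + p^c = p^d + p^e + p^f
lemma tripleBase {p : ℕ} (hp : p.Prime) (b c d e f : ℕ) (hbc : b ≤ c)
    (hde : d ≤ e) (hef : e ≤ f)
    (hsum : 1 + p^b + p^c = p^d + p^e + p^f) (hexp : b + c = d + e + f) :
    0 = d ∧ b = e ∧ c = f := by
  have hp1 : 1 < p := hp.one_lt
  cases d with
  | zero =>
    simp only [pow_zero] at hsum
    have := pairLem hp b c e f hbc hef (by omega)
    omega
  | succ d =>
    exfalso
    have he1 : 1 ≤ e := by omega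
    have hf1 : 1 ≤ f := by omega
    have hdd : p ∣ p ^ (d+1) := dvd_pow_self p (Nat.succ_ne_zero d)
    have hde' : p ∣ p ^ e := dvd_pow_self p (by omega)
    have hdf : p ∣ p ^ f := dvd_pow_self p (by omega)
    -- b = 0
    have hb : b = 0 := by
      by_contra hb
      have hc : 0 < c := by omega
      have h1 : p ∣ p ^ b := dvd_pow_self p (by omega)
      have h2 : p ∣ p ^ c := dvd_pow_self p (by omega)
      have : p ∣ 1 := by
        have h3 : p ∣ 1 + (p ^ b + p ^ c) := by
          rw [show 1 + (p^b+p^c) = p^(d+1)+p^e+p^f by omega]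
          exact dvd_add (dvd_add hdd hde') hdf
        exact (Nat.dvd_add_right (dvd_add h1 h2)).mp (by rwa [add_comm] at h3)
      have := Nat.dvd_one.mp this; omega
    subst hb
    simp only [pow_zero] at hsum
    -- c ≥ 1
    have hc : 0 < c := by
      by_contra hc
      have hc0 : c = 0 := by omega
      subst hc0
      have h1 : p ≤ p ^ (d+1) := Nat.le_self_pow (Nat.succ_ne_zero d) p
      have h2 : p ≤ p ^ e := Nat.le_self_pow (by omega) p
      have h3 : p ≤ p ^ f := Nat.le_self_pow (by omega) p
      simp only [pow_zero] at hsum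
      omega
    -- p = 2
    have hp2 : p = 2 := by
      have hdc : p ∣ p ^ c := dvd_pow_self p (by omega)
      have : p ∣ 2 := by
        have h3 : p ∣ 2 + p ^ c := by
          rw [show 2 + p^c = p^(d+1)+p^e+p^f by omega]
          exact dvd_add (dvd_add hdd hde') hdf
        exact (Nat.dvd_add_right hdc).mp (by rwa [add_comm] at h3)
      have := Nat.le_of_dvd (by norm_num) this
      omega
    subst hp2
    -- c ≥ 2
    have hc2 : 2 ≤ c := by
      by_contra hc2
      have hc1 : c = 1 := by omega
      subst hc1
      have h1 : 2 ≤ 2 ^ (d+1) := Nat.le_self_pow (Nat.succ_ne_zero d) 2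
      have h2 : 2 ≤ 2 ^ e := Nat.le_self_pow (by omega) 2
      have h3 : 2 ≤ 2 ^ f := Nat.le_self_pow (by omega) 2
      norm_num at hsum
      omega
    -- d = 0 (i.e. d+1 = 1)
    have hd0 : d = 0 := by
      by_contra hd0
      have h4c : (4 : ℕ) ∣ 2 ^ c := by
        have : (2:ℕ)^2 ∣ 2^c := pow_dvd_pow 2 hc2
        norm_num at this; exact this
      have h4d : (4 : ℕ) ∣ 2 ^ (d+1) := by
        have : (2:ℕ)^2 ∣ 2^(d+1) := pow_dvd_pow 2 (by omega)
        norm_num at this; exact this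
      have h4e : (4 : ℕ) ∣ 2 ^ e := by
        have : (2:ℕ)^2 ∣ 2^e := pow_dvd_pow 2 (by omega)
        norm_num at this; exact this
      have h4f : (4 : ℕ) ∣ 2 ^ f := by
        have : (2:ℕ)^2 ∣ 2^f := pow_dvd_pow 2 (by omega)
        norm_num at this; exact this
      omega
    subst hd0
    norm_num at hsum
    -- 2^c = 2^e + 2^f
    have hkey : 2 ^ c = 2 ^ e + 2 ^ f := by omega
    -- show f = e and c = e + 1
    have hec : e < c := by
      by_contra hec
      have : 2 ^ c ≤ 2 ^ e := Nat.pow_le_pow_right (by norm_num) (by omega)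
      have : 0 < 2 ^ f := Nat.pow_pos (by norm_num)
      omega
    obtain ⟨g, rfl⟩ : ∃ g, f = e + g := ⟨f - e, by omega⟩
    obtain ⟨k, rfl⟩ : ∃ k, c = e + (k + 1) := ⟨c - e - 1, by omega⟩
    have h2e : 0 < 2 ^ e := Nat.pow_pos (by norm_num)
    have hkey2 : 2 ^ (k+1) = 1 + 2 ^ g := by
      have h' : 2 ^ e * 2 ^ (k+1) = 2 ^ e * (1 + 2 ^ g) := by
        rw [← pow_add, mul_add, mul_one, ← pow_add]; exact hkey
      exact Nat.eq_of_mul_eq_mul_left h2e h'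
    have hg0 : g = 0 := by
      by_contra hg0
      have h1 : (2:ℕ) ∣ 2 ^ (k+1) := dvd_pow_self 2 (Nat.succ_ne_zero k)
      have h2 : (2:ℕ) ∣ 2 ^ g := dvd_pow_self 2 (by omega)
      omega
    subst hg0
    norm_num at hkey2
    have hk0 : k = 0 := by
      by_contra hk0
      have : 2 ^ 1 < 2 ^ (k+1) := Nat.pow_lt_pow_right (by norm_num) (by omega)
      norm_num at this; omega
    subst hk0
    -- now exponent sum: c = e+1, f = e, and 0 + 0 + (e+1) = 1 + e + e
    omega

lemma keyLem {p : ℕ} (hp : p.Prime) :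
    ∀ a b c d e f : ℕ, a ≤ b → b ≤ c → d ≤ e → e ≤ f →
      p^a + p^b + p^c = p^d + p^e + p^f → a + b + c = d + e + f →
      a = d ∧ b = e ∧ c = f := by
  intro a
  induction a with
  | zero =>
    intro b c d e f hab hbc hde hef h hx
    have := tripleBase hp b c d e f hbc hde hef (by simpa using h) (by omega)
    omega
  | succ a ih =>
    intro b c d e f hab hbc hde hef h hx
    cases d with
    | zero =>
      have := tripleBase hp e f (a+1) b c hef hab hbc (by simpa using h.symm) (by omega)
      omega
    | succ d =>
      obtain ⟨b, rfl⟩ : ∃ b', b = b'+1 := ⟨b-1, by omega⟩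
      obtain ⟨c, rfl⟩ : ∃ c', c = c'+1 := ⟨c-1, by omega⟩
      obtain ⟨e, rfl⟩ : ∃ e', e = e'+1 := ⟨e-1, by omega⟩
      obtain ⟨f, rfl⟩ : ∃ f', f = f'+1 := ⟨f-1, by omega⟩
      have hcan : p ^ a + p ^ b + p ^ c = p ^ d + p ^ e + p ^ f := by
        have h' : (p ^ a + p ^ b + p ^ c) * p = (p ^ d + p ^ e + p ^ f) * p := by
          simp only [pow_succ] at h; ring_nf at h ⊢; linarith
        exact Nat.eq_of_mul_eq_mul_right hp.pos h'
      have := ih b c d e f (by omega) (by omega) (by omega) (by omega) hcan (by omega)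
      omega

lemma exists_sorted (s : Multiset ℕ) (h : Multiset.card s = 3) :
    ∃ a b c : ℕ, a ≤ b ∧ b ≤ c ∧ s = {a, b, c} := by
  have hsorted := s.pairwise_sort (· ≤ ·)
  have heq := s.sort_eq (· ≤ ·)
  set l := s.sort (· ≤ ·) with hl
  have hlen : l.length = 3 := by rw [Multiset.length_sort, h]
  match l, hsorted, heq, hlen with
  | [a, b, c], hsorted, heq, _ =>
    refine ⟨a, b, c, ?_, ?_, ?_⟩
    · simp [List.pairwise_cons] at hsorted; tauto
    · simp [List.pairwise_cons] at hsorted; tauto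
    · rw [← heq]; rfl

theorem stmt3 (p n : ℕ) (hp : p.Prime) (hn : 0 < n) : ¬ IsCTN (p ^ n) := by
  rintro ⟨⟨s, t, hs3, ht3, hspos, htpos, hsprod, htprod, hsum, hne⟩, -⟩
  obtain ⟨a, b, c, hab, hbc, rfl⟩ := exists_sorted s hs3
  obtain ⟨d, e, f, hde, hef, rfl⟩ := exists_sorted t ht3
  simp only [Multiset.prod_cons, Multiset.prod_singleton, Multiset.insert_eq_cons] at hsprod htprod
  simp only [Multiset.sum_cons, Multiset.sum_singleton, Multiset.insert_eq_cons] at hsum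
  have ha : a ∣ p ^ n := ⟨b * c, by rw [← hsprod]⟩
  have hb : b ∣ p ^ n := ⟨a * c, by rw [← hsprod]; ring⟩
  have hc : c ∣ p ^ n := ⟨a * b, by rw [← hsprod]; ring⟩
  have hd : d ∣ p ^ n := ⟨e * f, by rw [← htprod]⟩
  have he : e ∣ p ^ n := ⟨d * f, by rw [← htprod]; ring⟩
  have hf : f ∣ p ^ n := ⟨d * e, by rw [← htprod]; ring⟩
  obtain ⟨i, hi, rfl⟩ := (Nat.dvd_prime_pow hp).mp ha
  obtain ⟨j, hj, rfl⟩ := (Nat.dvd_prime_pow hp).mp hb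
  obtain ⟨k, hk, rfl⟩ := (Nat.dvd_prime_pow hp).mp hc
  obtain ⟨l, hl, rfl⟩ := (Nat.dvd_prime_pow hp).mp hd
  obtain ⟨m, hm, rfl⟩ := (Nat.dvd_prime_pow hp).mp he
  obtain ⟨o, ho, rfl⟩ := (Nat.dvd_prime_pow hp).mp hf
  have hij : i ≤ j := (Nat.pow_le_pow_iff_right hp.one_lt).mp hab
  have hjk : j ≤ k := (Nat.pow_le_pow_iff_right hp.one_lt).mp hbc
  have hlm : l ≤ m := (Nat.pow_le_pow_iff_right hp.one_lt).mp hde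
  have hmo : m ≤ o := (Nat.pow_le_pow_iff_right hp.one_lt).mp hef
  have hn1 : i + j + k = n := by
    have : p ^ (i + j + k) = p ^ n := by rw [pow_add, pow_add, ← hsprod]; ring
    exact Nat.pow_right_injective hp.two_le this
  have hn2 : l + m + o = n := by
    have : p ^ (l + m + o) = p ^ n := by rw [pow_add, pow_add, ← htprod]; ring
    exact Nat.pow_right_injective hp.two_le this
  have := keyLem hp i j k l m o hij hjk hlm hmo (by linarith [hsum]) (by omega)
  obtain ⟨h1, h2, h3⟩ := this
  subst h1; subst h2; subst h3
  exact hne rfl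
end

section
/- If N = pq is a product of two (not necessarily distinct) primes, then N is not a census-taker number. -/
lemma ms_swap12 (x y z : ℕ) : ({x, y, z} : Multiset ℕ) = {y, x, z} :=
  Multiset.cons_swap x y {z}

lemma ms_swap23 (x y z : ℕ) : ({x, y, z} : Multiset ℕ) = {x, z, y} :=
  congrArg (x ::ₘ ·) (Multiset.cons_swap y z 0)

lemma dvd_cases {p q : ℕ} (hp : p.Prime) (hq : q.Prime) {d : ℕ} (hd : d ∣ p * q) :
    d = 1 ∨ d = p ∨ d = q ∨ d = p * q := by
  by_cases h : p ∣ d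
  · obtain ⟨e, rfl⟩ := h
    have he : e ∣ q := (mul_dvd_mul_iff_left (a := p) hp.pos.ne').mp hd
    rcases (hq.eq_one_or_self_of_dvd e he) with rfl | rfl
    · right; left; simp
    · right; right; right; rfl
  · have hco : Nat.Coprime d p := Nat.Coprime.symm ((Nat.Prime.coprime_iff_not_dvd hp).mpr h)
    have : d ∣ q := hco.dvd_of_dvd_mul_left hd
    rcases (hq.eq_one_or_self_of_dvd d this) with rfl | rfl
    · left; rfl
    · right; right; left; rfl

lemma pair_cases {p q : ℕ} (hp : p.Prime) (hq : q.Prime) {b c : ℕ} (h : b * c = p * q) :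
    (b = 1 ∧ c = p * q) ∨ (b = p ∧ c = q) ∨ (b = q ∧ c = p) ∨ (b = p * q ∧ c = 1) := by
  have hb : b ∣ p * q := ⟨c, h.symm⟩
  rcases dvd_cases hp hq hb with rfl | rfl | rfl | rfl
  · exact Or.inl ⟨rfl, by simpa using h⟩
  · exact Or.inr (Or.inl ⟨rfl, Nat.eq_of_mul_eq_mul_left hp.pos h⟩)
  · refine Or.inr (Or.inr (Or.inl ⟨rfl, Nat.eq_of_mul_eq_mul_left hq.pos ?_⟩))
    rw [h, mul_comm]
  · refine Or.inr (Or.inr (Or.inr ⟨rfl, Nat.eq_of_mul_eq_mul_left (mul_pos hp.pos hq.pos) ?_⟩))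
    rw [h, mul_one]

lemma one_of_three {p q a b c : ℕ} (hp : p.Prime) (hq : q.Prime)
    (ha : 0 < a) (hb : 0 < b) (hc : 0 < c) (h : a * b * c = p * q) :
    a = 1 ∨ b = 1 ∨ c = 1 := by
  by_contra hcon
  push_neg at hcon
  obtain ⟨h1, h2, h3⟩ := hcon
  have key : ∀ n : ℕ, 0 < n → n ≠ 1 → 1 ≤ n.primeFactorsList.length := by
    intro n hn hn1
    rcases Nat.exists_prime_and_dvd hn1 with ⟨r, hr, hrd⟩
    have : r ∈ n.primeFactorsList := (Nat.mem_primeFactorsList hn.ne').mpr ⟨hr, hrd⟩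
    exact List.length_pos_iff.mpr (by intro hnil; simp [hnil] at this)
  have la := key a ha h1
  have lb := key b hb h2
  have lc := key c hc h3
  have p1 : (a*b).primeFactorsList.length
      = a.primeFactorsList.length + b.primeFactorsList.length := by
    simpa using (Nat.perm_primeFactorsList_mul ha.ne' hb.ne').length_eq
  have p2 : (a*b*c).primeFactorsList.length
      = (a*b).primeFactorsList.length + c.primeFactorsList.length := by
    simpa using (Nat.perm_primeFactorsList_mul (Nat.mul_ne_zero ha.ne' hb.ne') hc.ne').length_eq
  have p3 : (p*q).primeFactorsList.length = 2 := by
    have hl := (Nat.perm_primeFactorsList_mul hp.pos.ne' hq.pos.ne').length_eq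
    rw [Nat.primeFactorsList_prime hp, Nat.primeFactorsList_prime hq] at hl
    simpa using hl
  rw [h, p3] at p2
  omega

lemma triple_cases {p q : ℕ} (hp : p.Prime) (hq : q.Prime) {s : Multiset ℕ}
    (hcard : Multiset.card s = 3) (hpos : ∀ x ∈ s, 0 < x) (hprod : s.prod = p * q) :
    s = {1, 1, p * q} ∨ s = {1, p, q} := by
  obtain ⟨a, b, c, rfl⟩ := Multiset.card_eq_three.mp hcard
  have ha : 0 < a := hpos a (by simp)
  have hb : 0 < b := hpos b (by simp)
  have hc : 0 < c := hpos c (by simp)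
  have hm : a * b * c = p * q := by
    rw [← hprod]; simp [mul_assoc, Multiset.prod_cons]
  rcases one_of_three hp hq ha hb hc hm with rfl | rfl | rfl
  · have hbc : b * c = p * q := by simpa using hm
    rcases pair_cases hp hq hbc with ⟨h1, h2⟩ | ⟨h1, h2⟩ | ⟨h1, h2⟩ | ⟨h1, h2⟩ <;> rw [h1, h2]
    · exact Or.inl rfl
    · exact Or.inr rfl
    · exact Or.inr (ms_swap23 1 p q).symm
    · exact Or.inl (ms_swap23 1 1 (p*q)).symm
  · have hac : a * c = p * q := by rw [← hm]; ring
    rcases pair_cases hp hq hac with ⟨h1, h2⟩ | ⟨h1, h2⟩ | ⟨h1, h2⟩ | ⟨h1, h2⟩ <;> rw [h1, h2]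
    · exact Or.inl rfl
    · exact Or.inr (ms_swap12 p 1 q)
    · exact Or.inr ((ms_swap12 q 1 p).trans (ms_swap23 1 q p))
    · exact Or.inl ((ms_swap12 (p*q) 1 1).trans (ms_swap23 1 (p*q) 1))
  · have hab : a * b = p * q := by simpa using hm
    rcases pair_cases hp hq hab with ⟨h1, h2⟩ | ⟨h1, h2⟩ | ⟨h1, h2⟩ | ⟨h1, h2⟩ <;> rw [h1, h2]
    · exact Or.inl (ms_swap23 1 1 (p*q)).symm
    · exact Or.inr ((ms_swap23 p q 1).trans (ms_swap12 p 1 q))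
    · exact Or.inr (((ms_swap23 q p 1).trans (ms_swap12 q 1 p)).trans (ms_swap23 1 q p))
    · exact Or.inl ((ms_swap12 (p*q) 1 1).trans (ms_swap23 1 (p*q) 1))

theorem stmt4 (p q : ℕ) (hp : p.Prime) (hq : q.Prime) : ¬ IsCTN (p * q) := by
  rintro ⟨⟨s, t, hc1, hc2, hp1, hp2, hpr1, hpr2, hsum, hne⟩, -⟩
  rcases triple_cases hp hq hc1 hp1 hpr1 with rfl | rfl <;>
    rcases triple_cases hp hq hc2 hp2 hpr2 with rfl | rfl
  · exact hne rfl
  · simp [Multiset.sum_cons] at hsum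
    nlinarith [hp.two_le, hq.two_le]
  · simp [Multiset.sum_cons] at hsum
    nlinarith [hp.two_le, hq.two_le]
  · exact hne rfl
end

section
/- Every census-taker number is a product of at least four (not necessarily distinct) primes, i.e., if N is a census-taker number then Ω(N) ≥ 4, where Ω counts prime factors with multiplicity. -/
private lemma omega_mul {x y : ℕ} (hx : x ≠ 0) (hy : y ≠ 0) :
    (x*y).primeFactorsList.length = x.primeFactorsList.length + y.primeFactorsList.length := by
  simpa using (Nat.perm_primeFactorsList_mul hx hy).length_eq

private lemma omega_pos {x : ℕ} (hx : 2 ≤ x) : 1 ≤ x.primeFactorsList.length := by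
  rcases Nat.lt_or_ge x.primeFactorsList.length 1 with h | h
  · interval_cases h' : x.primeFactorsList.length
    · rw [List.length_eq_zero_iff] at h'
      rw [Nat.primeFactorsList_eq_nil] at h'
      omega
  · exact h

private lemma omega_one_prime {x : ℕ} (h : x.primeFactorsList.length = 1) : x.Prime := by
  rcases List.length_eq_one_iff.mp h with ⟨p, hp⟩
  have hx : x ≠ 0 := by
    intro h0; rw [h0] at hp; simp [Nat.primeFactorsList_zero] at hp
  have hprod := Nat.prod_primeFactorsList hx
  rw [hp] at hprod
  simp at hprod
  have : p.Prime := Nat.prime_of_mem_primeFactorsList (by rw [hp]; simp)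
  rwa [← hprod]

private lemma quad {b c e f : ℕ} (hbc : b ≤ c) (hef : e ≤ f)
    (hs : b + c = e + f) (hp : b * c = e * f) : b = e ∧ c = f := by
  have hs' : (b:ℤ) + c = e + f := by exact_mod_cast hs
  have hp' : (b:ℤ) * c = e * f := by exact_mod_cast hp
  have h1 : ((c:ℤ) - b)^2 = ((f:ℤ) - e)^2 := by nlinarith [hs', hp']
  have hb' : (0:ℤ) ≤ (c:ℤ) - b := by
    have : (b:ℤ) ≤ c := by exact_mod_cast hbc
    linarith
  have he' : (0:ℤ) ≤ (f:ℤ) - e := by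
    have : (e:ℤ) ≤ f := by exact_mod_cast hef
    linarith
  have h2 : (c:ℤ) - b = (f:ℤ) - e := by nlinarith [h1, hb', he']
  have h4 : c + e = f + b := by exact_mod_cast (by linarith : (c:ℤ) + e = f + b)
  omega

private lemma prime_eq_of_dvd3 {p d e f : ℕ} (hp : p.Prime) (hd : d.Prime)
    (he : e.Prime) (hf : f.Prime) (hdvd : p ∣ d * e * f) :
    p = d ∨ p = e ∨ p = f := by
  rcases (Nat.Prime.dvd_mul hp).mp hdvd with h | h
  · rcases (Nat.Prime.dvd_mul hp).mp h with h' | h'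
    · exact Or.inl ((Nat.prime_dvd_prime_iff_eq hp hd).mp h')
    · exact Or.inr (Or.inl ((Nat.prime_dvd_prime_iff_eq hp he).mp h'))
  · exact Or.inr (Or.inr ((Nat.prime_dvd_prime_iff_eq hp hf).mp h))

/-- No triple `(1,1,c)` can match a different sorted triple. -/
private lemma aux11 {c d e f : ℕ} (hd1 : 1 ≤ d) (hde : d ≤ e) (hef : e ≤ f)
    (hp : c = d * e * f) (hs : 2 + c = d + e + f) : d = 1 ∧ e = 1 ∧ f = c := by
  by_cases he2 : 2 ≤ e
  · by_cases hd2 : 2 ≤ d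
    · exfalso
      have h1 : 2 * (2 * f) ≤ d * e * f := by
        calc 2 * (2 * f) ≤ d * (e * f) := Nat.mul_le_mul hd2 (Nat.mul_le_mul he2 le_rfl)
        _ = d * e * f := (mul_assoc d e f).symm
      omega
    · have hd' : d = 1 := by omega
      exfalso
      subst hd'
      simp only [one_mul] at hp
      have h1 : 2 * f ≤ e * f := Nat.mul_le_mul he2 le_rfl
      omega
  · have he' : e = 1 := by omega
    have hd' : d = 1 := by omega
    subst he'; subst hd'
    simp only [one_mul] at hp
    omega

private lemma aux_pq {q d e f p : ℕ} (hd : d.Prime) (he : e.Prime) (hf : f.Prime)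
    (hp : p.Prime) (hpe : p * q = d * e * f) (hs : 1 + p + q = d + e + f) : False := by
  have hd2 := hd.two_le
  have he2 := he.two_le
  have hf2 := hf.two_le
  have hdvd : p ∣ d * e * f := ⟨q, hpe.symm⟩
  rcases prime_eq_of_dvd3 hp hd he hf hdvd with rfl | rfl | rfl
  · have hq : q = e * f :=
      Nat.eq_of_mul_eq_mul_left hp.pos (by rw [hpe]; ring)
    have h1 : 2 * e ≤ e * f := by
      calc 2 * e = e * 2 := by ring
      _ ≤ e * f := Nat.mul_le_mul le_rfl hf2
    have h2 : 2 * f ≤ e * f := Nat.mul_le_mul he2 le_rfl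
    omega
  · have hq : q = d * f :=
      Nat.eq_of_mul_eq_mul_left hp.pos (by rw [hpe]; ring)
    have h1 : 2 * d ≤ d * f := by
      calc 2 * d = d * 2 := by ring
      _ ≤ d * f := Nat.mul_le_mul le_rfl hf2
    have h2 : 2 * f ≤ d * f := Nat.mul_le_mul hd2 le_rfl
    omega
  · have hq : q = d * e :=
      Nat.eq_of_mul_eq_mul_left hp.pos (by rw [hpe]; ring)
    have h1 : 2 * d ≤ d * e := by
      calc 2 * d = d * 2 := by ring
      _ ≤ d * e := Nat.mul_le_mul le_rfl he2
    have h2 : 2 * e ≤ d * e := Nat.mul_le_mul hd2 le_rfl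
    omega

/-- No triple `(1,b,c)` with `b ≥ 2` can have same sum/product as an all-prime triple. -/
private lemma aux23 {b c d e f : ℕ} (hb2 : 2 ≤ b) (hbc : b ≤ c)
    (hd : d.Prime) (he : e.Prime) (hf : f.Prime)
    (hp : b * c = d * e * f) (hs : 1 + b + c = d + e + f)
    (hΩ : (b * c).primeFactorsList.length ≤ 3) : False := by
  have hb0 : b ≠ 0 := by omega
  have hc0 : c ≠ 0 := by omega
  have hΩsplit := omega_mul hb0 hc0
  have hΩb := omega_pos hb2
  have hΩc := omega_pos (by omega : 2 ≤ c)
  -- one of b, c has Ω = 1, hence prime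
  by_cases h1 : b.primeFactorsList.length = 1
  · exact aux_pq hd he hf (omega_one_prime h1) hp hs
  · have hc1 : c.primeFactorsList.length = 1 := by omega
    exact aux_pq hd he hf (omega_one_prime hc1)
      (by linarith [hp, Nat.mul_comm b c] : c * b = d * e * f) (by omega)

private lemma key {a b c d e f : ℕ} (ha : 1 ≤ a) (hd1 : 1 ≤ d)
    (hab : a ≤ b) (hbc : b ≤ c) (hde : d ≤ e) (hef : e ≤ f)
    (hp : a * b * c = d * e * f) (hs : a + b + c = d + e + f)
    (hΩ : (a * b * c).primeFactorsList.length ≤ 3) :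
    a = d ∧ b = e ∧ c = f := by
  have ha0 : a ≠ 0 := by omega
  have hb0 : b ≠ 0 := by omega
  have hc0 : c ≠ 0 := by omega
  have hd0 : d ≠ 0 := by omega
  have he0 : e ≠ 0 := by omega
  have hf0 : f ≠ 0 := by omega
  by_cases hb1 : b = 1
  · -- a = b = 1, triple (1,1,c)
    have ha1 : a = 1 := by omega
    subst ha1; subst hb1
    simp only [one_mul] at hp
    obtain ⟨h1, h2, h3⟩ := aux11 hd1 hde hef hp (by omega)
    omega
  · by_cases he1 : e = 1
    · have hd1' : d = 1 := by omega
      subst hd1'; subst he1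
      simp only [one_mul] at hp
      obtain ⟨h1, h2, h3⟩ := aux11 (by omega : 1 ≤ a) hab hbc hp.symm (by omega)
      omega
    · -- b ≥ 2, e ≥ 2
      have hb2 : 2 ≤ b := by omega
      have he2 : 2 ≤ e := by omega
      by_cases ha1 : a = 1
      · by_cases hd1' : d = 1
        · subst ha1; subst hd1'
          simp only [one_mul] at hp
          obtain ⟨h1, h2⟩ := quad hbc hef (by omega) hp
          omega
        · -- d,e,f all ≥ 2, hence all prime
          exfalso
          have hd2 : 2 ≤ d := by omega
          have hΩ' : (d*e*f).primeFactorsList.length ≤ 3 := by rwa [← hp]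
          rw [omega_mul (Nat.mul_ne_zero hd0 he0) hf0, omega_mul hd0 he0] at hΩ'
          have h1 := omega_pos hd2
          have h2 := omega_pos he2
          have h3 := omega_pos (by omega : 2 ≤ f)
          have hdp : d.Prime := omega_one_prime (by omega)
          have hep : e.Prime := omega_one_prime (by omega)
          have hfp : f.Prime := omega_one_prime (by omega)
          subst ha1
          simp only [one_mul] at hp hΩ
          exact aux23 hb2 hbc hdp hep hfp hp (by omega) hΩ
      · by_cases hd1' : d = 1
        · exfalso
          have ha2 : 2 ≤ a := by omega
          rw [omega_mul (Nat.mul_ne_zero ha0 hb0) hc0, omega_mul ha0 hb0] at hΩ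
          have h1 := omega_pos ha2
          have h2 := omega_pos hb2
          have h3 := omega_pos (by omega : 2 ≤ c)
          have hap : a.Prime := omega_one_prime (by omega)
          have hbp : b.Prime := omega_one_prime (by omega)
          have hcp : c.Prime := omega_one_prime (by omega)
          subst hd1'
          simp only [one_mul] at hp
          exact aux23 he2 hef hap hbp hcp hp.symm (by omega)
            (by rw [← hp, omega_mul (Nat.mul_ne_zero ha0 hb0) hc0, omega_mul ha0 hb0]; omega)
        · -- all six ≥ 2, all prime
          have ha2 : 2 ≤ a := by omega
          have hd2 : 2 ≤ d := by omega
          have hΩ' : (d*e*f).primeFactorsList.length ≤ 3 := by rwa [← hp]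
          rw [omega_mul (Nat.mul_ne_zero hd0 he0) hf0, omega_mul hd0 he0] at hΩ'
          rw [omega_mul (Nat.mul_ne_zero ha0 hb0) hc0, omega_mul ha0 hb0] at hΩ
          have g1 := omega_pos ha2
          have g2 := omega_pos hb2
          have g3 := omega_pos (by omega : 2 ≤ c)
          have g4 := omega_pos hd2
          have g5 := omega_pos he2
          have g6 := omega_pos (by omega : 2 ≤ f)
          have hap : a.Prime := omega_one_prime (by omega)
          have hbp : b.Prime := omega_one_prime (by omega)
          have hcp : c.Prime := omega_one_prime (by omega)
          have hdp : d.Prime := omega_one_prime (by omega)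
          have hep : e.Prime := omega_one_prime (by omega)
          have hfp : f.Prime := omega_one_prime (by omega)
          have hdvd : a ∣ d * e * f := ⟨b * c, by rw [← hp]; ring⟩
          rcases prime_eq_of_dvd3 hap hdp hep hfp hdvd with rfl | rfl | rfl
          · have hbc' : b * c = e * f :=
              Nat.eq_of_mul_eq_mul_left hap.pos (by rw [← mul_assoc, hp]; ring)
            obtain ⟨h1, h2⟩ := quad hbc hef (by omega) hbc'
            omega
          · have hbc' : b * c = d * f :=
              Nat.eq_of_mul_eq_mul_left hap.pos (by rw [← mul_assoc, hp]; ring)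
            obtain ⟨h1, h2⟩ := quad hbc (le_trans hde hef) (by omega) hbc'
            omega
          · have hbc' : b * c = d * e :=
              Nat.eq_of_mul_eq_mul_left hap.pos (by rw [← mul_assoc, hp]; ring)
            obtain ⟨h1, h2⟩ := quad hbc hde (by omega) hbc'
            omega

theorem stmt5 (N : ℕ) (h : IsCTN N) : 4 ≤ N.primeFactorsList.length := by
  obtain ⟨⟨s, t, hcs, hct, hps, hpt, hprs, hprt, hsum, hne⟩, _⟩ := h
  by_contra hlt
  push_neg at hlt
  have hΩ : N.primeFactorsList.length ≤ 3 := by omega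
  -- sort s
  set ls := s.sort (· ≤ ·) with hls
  set lt := t.sort (· ≤ ·) with hlt2
  have hseq : (↑ls : Multiset ℕ) = s := Multiset.sort_eq s _
  have hteq : (↑lt : Multiset ℕ) = t := Multiset.sort_eq t _
  have hlens : ls.length = 3 := by rw [hls, Multiset.length_sort, hcs]
  have hlent : lt.length = 3 := by rw [hlt2, Multiset.length_sort, hct]
  obtain ⟨a, b, c, habc⟩ := List.length_eq_three.mp hlens
  obtain ⟨d, e, f, hdef⟩ := List.length_eq_three.mp hlent
  have hsorted_s : List.Pairwise (· ≤ ·) ls := Multiset.pairwise_sort s _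
  have hsorted_t : List.Pairwise (· ≤ ·) lt := Multiset.pairwise_sort t _
  rw [habc] at hsorted_s hseq
  rw [hdef] at hsorted_t hteq
  simp [List.pairwise_cons] at hsorted_s hsorted_t
  obtain ⟨⟨hab, hac⟩, hbc⟩ := hsorted_s
  obtain ⟨⟨hde, hdf⟩, hef⟩ := hsorted_t
  have ha : 0 < a := hps a (by rw [← hseq]; simp)
  have hd : 0 < d := hpt d (by rw [← hteq]; simp)
  have hprods : a * b * c = N := by
    rw [← hprs, ← hseq]; simp [Multiset.prod_coe]; ring
  have hprodt : d * e * f = N := by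
    rw [← hprt, ← hteq]; simp [Multiset.prod_coe]; ring
  have hsums : a + b + c = d + e + f := by
    have h1 : s.sum = a + b + c := by rw [← hseq]; simp [Multiset.sum_coe]; ring
    have h2 : t.sum = d + e + f := by rw [← hteq]; simp [Multiset.sum_coe]; ring
    rw [← h1, ← h2, hsum]
  have hkey := key ha hd hab hbc hde hef (by rw [hprods, hprodt]) hsums
    (by rw [hprods]; exact hΩ)
  obtain ⟨h1, h2, h3⟩ := hkey
  apply hne
  rw [← hseq, ← hteq, h1, h2, h3]
end

section
/- If N = pqr is a product of exactly three (not necessarily distinct) primes, then N is not a census-taker number. -/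
private lemma ms12 (x y z : ℕ) : ({x,y,z}:Multiset ℕ) = {y,x,z} := Multiset.cons_swap x y {z}
private lemma ms23 (x y z : ℕ) : ({x,y,z}:Multiset ℕ) = {x,z,y} := congrArg _ (Multiset.cons_swap y z 0)
private lemma msrot (x y z : ℕ) : ({x,y,z}:Multiset ℕ) = {y,z,x} := by rw [ms12, ms23]

private lemma msum (x y z : ℕ) : ({x,y,z}:Multiset ℕ).sum = x+y+z := by simp; ring
private lemma mprod (x y z : ℕ) : ({x,y,z}:Multiset ℕ).prod = x*y*z := by simp; ring

private lemma split1 (q a b : ℕ) (hq : q.Prime) (h : a*b = q) : (a=1 ∧ b=q) ∨ (a=q ∧ b=1) := by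
  rcases hq.eq_one_or_self_of_dvd a ⟨b, h.symm⟩ with h1 | h1
  · subst h1; simp at h; tauto
  · subst h1
    have hb : a * b = a * 1 := by simpa using h
    have := Nat.eq_of_mul_eq_mul_left hq.pos hb
    tauto

private lemma split2 (p q a b : ℕ) (hp : p.Prime) (hq : q.Prime) (h : a*b = p*q) :
    (a=1 ∧ b=p*q) ∨ (a=p ∧ b=q) ∨ (a=q ∧ b=p) ∨ (a=p*q ∧ b=1) := by
  have hd : p ∣ a*b := h ▸ dvd_mul_right p q
  rcases (Nat.Prime.dvd_mul hp).mp hd with ⟨a', rfl⟩ | ⟨b', rfl⟩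
  · have h' : p * (a' * b) = p * q := by rw [← h]; ring
    have h2 := Nat.eq_of_mul_eq_mul_left hp.pos h'
    rcases split1 q a' b hq h2 with ⟨rfl, rfl⟩ | ⟨rfl, rfl⟩
    · right; left; simp
    · right; right; right; simp
  · have h' : p * (a * b') = p * q := by rw [← h]; ring
    have h2 := Nat.eq_of_mul_eq_mul_left hp.pos h'
    rcases split1 q a b' hq h2 with ⟨rfl, rfl⟩ | ⟨rfl, rfl⟩
    · left; simp [mul_comm]
    · right; right; left; simp

private lemma split3two (q r a b c : ℕ) (hq : q.Prime) (hr : r.Prime) (h : a*b*c = q*r) :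
    (a=1 ∧ b=1 ∧ c=q*r) ∨ (a=1 ∧ b=q ∧ c=r) ∨ (a=1 ∧ b=r ∧ c=q) ∨ (a=1 ∧ b=q*r ∧ c=1) ∨
    (a=q ∧ b=1 ∧ c=r) ∨ (a=q ∧ b=r ∧ c=1) ∨ (a=r ∧ b=1 ∧ c=q) ∨ (a=r ∧ b=q ∧ c=1) ∨
    (a=q*r ∧ b=1 ∧ c=1) := by
  have h' : a*(b*c) = q*r := by rw [← mul_assoc, h]
  rcases split2 q r a (b*c) hq hr h' with ⟨ha, hbc⟩ | ⟨ha, hbc⟩ | ⟨ha, hbc⟩ | ⟨ha, hbc⟩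
  · rcases split2 q r b c hq hr hbc with ⟨hb, hc⟩ | ⟨hb, hc⟩ | ⟨hb, hc⟩ | ⟨hb, hc⟩
    · exact Or.inl ⟨ha, hb, hc⟩
    · exact Or.inr (Or.inl ⟨ha, hb, hc⟩)
    · exact Or.inr (Or.inr (Or.inl ⟨ha, hb, hc⟩))
    · exact Or.inr (Or.inr (Or.inr (Or.inl ⟨ha, hb, hc⟩)))
  · rcases split1 r b c hr hbc with ⟨hb, hc⟩ | ⟨hb, hc⟩
    · exact Or.inr (Or.inr (Or.inr (Or.inr (Or.inl ⟨ha, hb, hc⟩))))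
    · exact Or.inr (Or.inr (Or.inr (Or.inr (Or.inr (Or.inl ⟨ha, hb, hc⟩)))))
  · rcases split1 q b c hq hbc with ⟨hb, hc⟩ | ⟨hb, hc⟩
    · exact Or.inr (Or.inr (Or.inr (Or.inr (Or.inr (Or.inr (Or.inl ⟨ha, hb, hc⟩))))))
    · exact Or.inr (Or.inr (Or.inr (Or.inr (Or.inr (Or.inr (Or.inr (Or.inl ⟨ha, hb, hc⟩)))))))
  · obtain ⟨hb, hc⟩ : b = 1 ∧ c = 1 := by simpa using hbc
    exact Or.inr (Or.inr (Or.inr (Or.inr (Or.inr (Or.inr (Or.inr (Or.inr ⟨ha, hb, hc⟩)))))))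

/-- classification of factorizations of `p*q*r` into three factors -/
private def Out (p q r : ℕ) (s : Multiset ℕ) : Prop :=
  s = {p,q,r} ∨
  (∃ x y z, x.Prime ∧ y.Prime ∧ z.Prime ∧ ({x,y,z}:Multiset ℕ) = {p,q,r} ∧ s = {1, x*y, z}) ∨
  s = {1,1,p*q*r}

private lemma split3aux (p q r a b c : ℕ) (hp : p.Prime) (hq : q.Prime) (hr : r.Prime)
    (h : a*b*c = p*q*r) (hpa : p ∣ a) : Out p q r {a,b,c} := by
  obtain ⟨a', rfl⟩ := hpa
  have h' : p * (a'*b*c) = p * (q*r) := by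
    rw [← mul_assoc, ← mul_assoc, ← mul_assoc, h, mul_assoc]
  have h2 : a'*b*c = q*r := Nat.eq_of_mul_eq_mul_left hp.pos h'
  rcases split3two q r a' b c hq hr h2 with
      ⟨h1, hb, hc⟩ | ⟨h1, hb, hc⟩ | ⟨h1, hb, hc⟩ | ⟨h1, hb, hc⟩ |
      ⟨h1, hb, hc⟩ | ⟨h1, hb, hc⟩ | ⟨h1, hb, hc⟩ | ⟨h1, hb, hc⟩ | ⟨h1, hb, hc⟩ <;>
    rw [h1, hb, hc]
  · exact Or.inr (Or.inl ⟨q, r, p, hq, hr, hp, (msrot p q r).symm, by rw [mul_one, msrot]⟩)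
  · exact Or.inl (by rw [mul_one])
  · exact Or.inl (by rw [mul_one, ms23])
  · exact Or.inr (Or.inl ⟨q, r, p, hq, hr, hp, (msrot p q r).symm, by rw [mul_one, msrot, ms12]⟩)
  · exact Or.inr (Or.inl ⟨p, q, r, hp, hq, hr, rfl, by rw [ms12]⟩)
  · exact Or.inr (Or.inl ⟨p, q, r, hp, hq, hr, rfl, by rw [msrot, msrot]⟩)
  · exact Or.inr (Or.inl ⟨p, r, q, hp, hr, hq, (ms23 p q r).symm, by rw [ms12]⟩)
  · exact Or.inr (Or.inl ⟨p, r, q, hp, hr, hq, (ms23 p q r).symm, by rw [msrot, msrot]⟩)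
  · exact Or.inr (Or.inr (by rw [msrot, mul_assoc]))

private lemma split3 (p q r a b c : ℕ) (hp : p.Prime) (hq : q.Prime) (hr : r.Prime)
    (h : a*b*c = p*q*r) : Out p q r {a,b,c} := by
  have hd : p ∣ a*(b*c) := ⟨q*r, by rw [← mul_assoc, h, mul_assoc]⟩
  rcases (Nat.Prime.dvd_mul hp).mp hd with h1 | h1
  · exact split3aux p q r a b c hp hq hr h h1
  rcases (Nat.Prime.dvd_mul hp).mp h1 with h2 | h2
  · have := split3aux p q r b a c hp hq hr (by rw [← h]; ring_nf) h2
    rwa [ms12] at this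
  · have := split3aux p q r c a b hp hq hr (by rw [← h]; ring_nf) h2
    rwa [msrot] at this

private lemma quad_aux (a b c d : ℕ) (h1 : a*b = c*d) (h2 : a+b = c+d) (hle : a ≤ c) :
    (a=c ∧ b=d) ∨ (a=d ∧ b=c) := by
  obtain ⟨m, rfl⟩ := Nat.exists_eq_add_of_le hle
  have hb : b = d + m := by omega
  subst hb
  rw [mul_add, add_mul] at h1
  have hm : a * m = m * d := Nat.add_left_cancel h1
  rcases Nat.eq_zero_or_pos m with rfl | hm0
  · left; omega
  · right
    have : a * m = d * m := by rw [hm]; ring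
    have had : a = d := Nat.eq_of_mul_eq_mul_right hm0 this
    omega

private lemma quad_s6 (a b c d : ℕ) (h1 : a*b = c*d) (h2 : a+b = c+d) :
    (a=c ∧ b=d) ∨ (a=d ∧ b=c) := by
  rcases le_total a c with h | h
  · exact quad_aux a b c d h1 h2 h
  · rcases quad_aux c d a b h1.symm h2.symm h with ⟨e1, e2⟩ | ⟨e1, e2⟩
    · exact Or.inl ⟨e1.symm, e2.symm⟩
    · exact Or.inr ⟨e2.symm, e1.symm⟩

private lemma prime_mem_two_le {x p q r : ℕ} (hp : p.Prime) (hq : q.Prime) (hr : r.Prime)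
    (hx : x ∈ ({p,q,r} : Multiset ℕ)) : 2 ≤ x := by
  simp at hx
  rcases hx with rfl | rfl | rfl
  exacts [hp.two_le, hq.two_le, hr.two_le]

private lemma out_eq (p q r : ℕ) (hp : p.Prime) (hq : q.Prime) (hr : r.Prime)
    (s t : Multiset ℕ) (hs : Out p q r s) (ht : Out p q r t) (hsum : s.sum = t.sum) :
    s = t := by
  have hp2 := hp.two_le; have hq2 := hq.two_le; have hr2 := hr.two_le
  rcases hs with rfl | ⟨x, y, z, hx, hy, hz, hxyz, rfl⟩ | rfl <;>
    rcases ht with rfl | ⟨x', y', z', hx', hy', hz', hxyz', rfl⟩ | rfl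
  -- (1,1)
  · rfl
  -- (1,2)
  · exfalso
    have hsum3 : x' + y' + z' = p + q + r := by
      have := congrArg Multiset.sum hxyz'; rwa [msum, msum] at this
    rw [msum, msum] at hsum
    have h1 : 2*y' ≤ x'*y' := Nat.mul_le_mul hx'.two_le le_rfl
    have h2 : x'*2 ≤ x'*y' := Nat.mul_le_mul le_rfl hy'.two_le
    set A := x'*y'
    omega
  -- (1,3)
  · exfalso
    rw [msum, msum] at hsum
    have h1 : p + q ≤ p * q := Nat.add_le_mul hp2 hq2
    have h2 : p*q + r ≤ (p*q) * r := Nat.add_le_mul (by nlinarith) hr2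
    set A := p*q
    set B := A*r
    omega
  -- (2,1)
  · exfalso
    have hsum3 : x + y + z = p + q + r := by
      have := congrArg Multiset.sum hxyz; rwa [msum, msum] at this
    rw [msum, msum] at hsum
    have h1 : 2*y ≤ x*y := Nat.mul_le_mul hx.two_le le_rfl
    have h2 : x*2 ≤ x*y := Nat.mul_le_mul le_rfl hy.two_le
    set A := x*y
    omega
  -- (2,2)
  · have hprod : (x*y)*z = (x'*y')*z' := by
      have e1 := congrArg Multiset.prod hxyz
      have e2 := congrArg Multiset.prod hxyz'
      rw [mprod, mprod] at e1 e2
      rw [mul_assoc, mul_assoc] at e1 e2 ⊢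
      rw [e1, e2]
    rw [msum, msum] at hsum
    have hsum2 : x*y + z = x'*y' + z' := by omega
    rcases quad_s6 (x*y) z (x'*y') z' hprod hsum2 with ⟨e1, e2⟩ | ⟨e1, e2⟩
    · rw [e1, e2]
    · rw [e1, e2, ms23]
  -- (2,3)
  · exfalso
    have hprod : (x*y)*z = p*q*r := by
      have e1 := congrArg Multiset.prod hxyz
      rw [mprod, mprod] at e1
      rw [mul_assoc] at e1 ⊢
      exact e1
    rw [msum, msum, ← hprod] at hsum
    have h4 : 2*2 ≤ x*y := Nat.mul_le_mul hx.two_le hy.two_le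
    have h1 : x*y + z ≤ (x*y)*z := Nat.add_le_mul (by omega) hz.two_le
    set A := x*y
    set B := A*z
    omega
  -- (3,1)
  · exfalso
    rw [msum, msum] at hsum
    have h1 : p + q ≤ p * q := Nat.add_le_mul hp2 hq2
    have h2 : p*q + r ≤ (p*q) * r := Nat.add_le_mul (by nlinarith) hr2
    set A := p*q
    set B := A*r
    omega
  -- (3,2)
  · exfalso
    have hprod : (x'*y')*z' = p*q*r := by
      have e1 := congrArg Multiset.prod hxyz'
      rw [mprod, mprod] at e1
      rw [mul_assoc] at e1 ⊢
      exact e1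
    rw [msum, msum, ← hprod] at hsum
    have h4 : 2*2 ≤ x'*y' := Nat.mul_le_mul hx'.two_le hy'.two_le
    have h1 : x'*y' + z' ≤ (x'*y')*z' := Nat.add_le_mul (by omega) hz'.two_le
    set A := x'*y'
    set B := A*z'
    omega
  -- (3,3)
  · rfl

theorem stmt6 (p q r : ℕ) (hp : p.Prime) (hq : q.Prime) (hr : r.Prime) :
    ¬ IsCTN (p * q * r) := by
  intro h0
  obtain ⟨⟨s, t, hpair⟩, -⟩ := h0
  obtain ⟨hcs, hct, -, -, hsp, htp, hsum, hne⟩ := hpair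
  obtain ⟨a, b, c, rfl⟩ := Multiset.card_eq_three.mp hcs
  obtain ⟨d, e, f, rfl⟩ := Multiset.card_eq_three.mp hct
  rw [mprod] at hsp htp
  have hs := split3 p q r a b c hp hq hr hsp
  have ht := split3 p q r d e f hp hq hr htp
  exact hne (out_eq p q r hp hq hr _ _ hs ht hsum)
end

section
/- If there are infinitely many primes p such that 2p - 1 is also prime, then there are infinitely many census-taker numbers. -/
lemma tri213 (a b c : ℕ) : ({a,b,c} : Multiset ℕ) = {b,a,c} := by
  simp only [Multiset.insert_eq_cons]; exact Multiset.cons_swap a b _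

lemma tri132 (a b c : ℕ) : ({a,b,c} : Multiset ℕ) = {a,c,b} := by
  simp only [Multiset.insert_eq_cons]; exact congrArg _ (Multiset.cons_swap b c _)

lemma tri231 (a b c : ℕ) : ({a,b,c} : Multiset ℕ) = {b,c,a} :=
  (tri213 a b c).trans (tri132 b a c)

lemma tri312 (a b c : ℕ) : ({a,b,c} : Multiset ℕ) = {c,a,b} :=
  (tri132 a b c).trans (tri213 a c b)

lemma tri321 (a b c : ℕ) : ({a,b,c} : Multiset ℕ) = {c,b,a} :=
  (tri312 a b c).trans (tri132 c a b)

lemma dvd_pp {p q x : ℕ} (hp : p.Prime) (hq : q.Prime) (hx : x ∣ p^2*q^2) :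
    ∃ i j, x = p^i * q^j := by
  obtain ⟨d1, d2, h1, h2, rfl⟩ := exists_dvd_and_dvd_of_dvd_mul hx
  obtain ⟨i, -, rfl⟩ := (Nat.dvd_prime_pow hp).mp h1
  obtain ⟨j, -, rfl⟩ := (Nat.dvd_prime_pow hq).mp h2
  exact ⟨i, j, rfl⟩

lemma exp_eq {p q A B : ℕ} (hp : p.Prime) (hq : q.Prime) (hne : p ≠ q)
    (h : p^A*q^B = p^2*q^2) : A = 2 ∧ B = 2 := by
  have hco : ∀ m n : ℕ, Nat.Coprime (p^m) (q^n) :=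
    fun m n => Nat.coprime_pow_primes m n hp hq hne
  have h1 : p^A ∣ p^2 := (hco A 2).dvd_of_dvd_mul_right (h ▸ dvd_mul_right (p^A) (q^B))
  have h2 : p^2 ∣ p^A := (hco 2 B).dvd_of_dvd_mul_right (h.symm ▸ dvd_mul_right (p^2) (q^2))
  have h3 : q^B ∣ q^2 := ((hco 2 B).symm).dvd_of_dvd_mul_left (h ▸ dvd_mul_left (q^B) (p^A))
  have h4 : q^2 ∣ q^B := ((hco A 2).symm).dvd_of_dvd_mul_left (h.symm ▸ dvd_mul_left (q^2) (p^2))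
  constructor
  · exact le_antisymm ((Nat.pow_dvd_pow_iff_le_right hp.one_lt).mp h1)
      ((Nat.pow_dvd_pow_iff_le_right hp.one_lt).mp h2)
  · exact le_antisymm ((Nat.pow_dvd_pow_iff_le_right hq.one_lt).mp h3)
      ((Nat.pow_dvd_pow_iff_le_right hq.one_lt).mp h4)

lemma classify {p q : ℕ} (hp : p.Prime) (hq : q.Prime) (hne : p ≠ q)
    (s : Multiset ℕ) (hcard : Multiset.card s = 3) (hprod : s.prod = p^2*q^2) :
    s = {1, p*q, p*q} ∨ s = {p, p, q*q} ∨ s = {1, 1, p*p*(q*q)} ∨ s = {1, p, p*(q*q)} ∨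
    s = {1, q, p*p*q} ∨ s = {1, p*p, q*q} ∨ s = {p, q, p*q} ∨ s = {q, q, p*p} := by
  obtain ⟨a, b, c, rfl⟩ := Multiset.card_eq_three.mp hcard
  simp only [Multiset.insert_eq_cons, Multiset.prod_cons, Multiset.prod_singleton] at hprod
  have ha : a ∣ p^2*q^2 := ⟨b*c, by rw [← hprod]; try ring⟩
  have hb : b ∣ p^2*q^2 := ⟨a*c, by rw [← hprod]; try ring⟩
  have hc : c ∣ p^2*q^2 := ⟨a*b, by rw [← hprod]; try ring⟩
  obtain ⟨i1, j1, rfl⟩ := dvd_pp hp hq ha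
  obtain ⟨i2, j2, rfl⟩ := dvd_pp hp hq hb
  obtain ⟨i3, j3, rfl⟩ := dvd_pp hp hq hc
  have hkey : p^(i1+(i2+i3))*q^(j1+(j2+j3)) = p^2*q^2 := by
    rw [pow_add, pow_add, pow_add, pow_add, ← hprod]; ring
  obtain ⟨hi, hj⟩ := exp_eq hp hq hne hkey
  have hi' : (i1=2∧i2=0∧i3=0)∨(i1=0∧i2=2∧i3=0)∨(i1=0∧i2=0∧i3=2)∨(i1=1∧i2=1∧i3=0)∨(i1=1∧i2=0∧i3=1)∨(i1=0∧i2=1∧i3=1) := by omega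
  have hj' : (j1=2∧j2=0∧j3=0)∨(j1=0∧j2=2∧j3=0)∨(j1=0∧j2=0∧j3=2)∨(j1=1∧j2=1∧j3=0)∨(j1=1∧j2=0∧j3=1)∨(j1=0∧j2=1∧j3=1) := by omega
  clear hkey hprod hi hj ha hb hc
  rcases hi' with ⟨rfl,rfl,rfl⟩|⟨rfl,rfl,rfl⟩|⟨rfl,rfl,rfl⟩|⟨rfl,rfl,rfl⟩|⟨rfl,rfl,rfl⟩|⟨rfl,rfl,rfl⟩ <;> rcases hj' with ⟨rfl,rfl,rfl⟩|⟨rfl,rfl,rfl⟩|⟨rfl,rfl,rfl⟩|⟨rfl,rfl,rfl⟩|⟨rfl,rfl,rfl⟩|⟨rfl,rfl,rfl⟩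
  · have e1 : p^2*q^2 = p*p*(q*q) := by ring
    have e2 : p^0*q^0 = 1 := by ring
    rw [e1, e2]
    exact Or.inr (Or.inr (Or.inl (tri231 _ _ _)))
  · have e1 : p^2*q^0 = p*p := by ring
    have e2 : p^0*q^2 = q*q := by ring
    have e3 : p^0*q^0 = 1 := by ring
    rw [e1, e2, e3]
    exact Or.inr (Or.inr (Or.inr (Or.inr (Or.inr (Or.inl (tri312 _ _ _))))))
  · have e1 : p^2*q^0 = p*p := by ring
    have e2 : p^0*q^0 = 1 := by ring
    have e3 : p^0*q^2 = q*q := by ring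
    rw [e1, e2, e3]
    exact Or.inr (Or.inr (Or.inr (Or.inr (Or.inr (Or.inl (tri213 _ _ _))))))
  · have e1 : p^2*q^1 = p*p*q := by ring
    have e2 : p^0*q^1 = q := by ring
    have e3 : p^0*q^0 = 1 := by ring
    rw [e1, e2, e3]
    exact Or.inr (Or.inr (Or.inr (Or.inr (Or.inl (tri321 _ _ _)))))
  · have e1 : p^2*q^1 = p*p*q := by ring
    have e2 : p^0*q^0 = 1 := by ring
    have e3 : p^0*q^1 = q := by ring
    rw [e1, e2, e3]
    exact Or.inr (Or.inr (Or.inr (Or.inr (Or.inl (tri231 _ _ _)))))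
  · have e1 : p^2*q^0 = p*p := by ring
    have e2 : p^0*q^1 = q := by ring
    rw [e1, e2]
    exact Or.inr (Or.inr (Or.inr (Or.inr (Or.inr (Or.inr (Or.inr (tri231 _ _ _)))))))
  · have e1 : p^0*q^2 = q*q := by ring
    have e2 : p^2*q^0 = p*p := by ring
    have e3 : p^0*q^0 = 1 := by ring
    rw [e1, e2, e3]
    exact Or.inr (Or.inr (Or.inr (Or.inr (Or.inr (Or.inl (tri321 _ _ _))))))
  · have e1 : p^0*q^0 = 1 := by ring
    have e2 : p^2*q^2 = p*p*(q*q) := by ring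
    rw [e1, e2]
    exact Or.inr (Or.inr (Or.inl (tri132 _ _ _)))
  · have e1 : p^0*q^0 = 1 := by ring
    have e2 : p^2*q^0 = p*p := by ring
    have e3 : p^0*q^2 = q*q := by ring
    rw [e1, e2, e3]
    exact Or.inr (Or.inr (Or.inr (Or.inr (Or.inr (Or.inl (rfl))))))
  · have e1 : p^0*q^1 = q := by ring
    have e2 : p^2*q^1 = p*p*q := by ring
    have e3 : p^0*q^0 = 1 := by ring
    rw [e1, e2, e3]
    exact Or.inr (Or.inr (Or.inr (Or.inr (Or.inl (tri312 _ _ _)))))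
  · have e1 : p^0*q^1 = q := by ring
    have e2 : p^2*q^0 = p*p := by ring
    rw [e1, e2]
    exact Or.inr (Or.inr (Or.inr (Or.inr (Or.inr (Or.inr (Or.inr (tri132 _ _ _)))))))
  · have e1 : p^0*q^0 = 1 := by ring
    have e2 : p^2*q^1 = p*p*q := by ring
    have e3 : p^0*q^1 = q := by ring
    rw [e1, e2, e3]
    exact Or.inr (Or.inr (Or.inr (Or.inr (Or.inl (tri132 _ _ _)))))
  · have e1 : p^0*q^2 = q*q := by ring
    have e2 : p^0*q^0 = 1 := by ring
    have e3 : p^2*q^0 = p*p := by ring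
    rw [e1, e2, e3]
    exact Or.inr (Or.inr (Or.inr (Or.inr (Or.inr (Or.inl (tri231 _ _ _))))))
  · have e1 : p^0*q^0 = 1 := by ring
    have e2 : p^0*q^2 = q*q := by ring
    have e3 : p^2*q^0 = p*p := by ring
    rw [e1, e2, e3]
    exact Or.inr (Or.inr (Or.inr (Or.inr (Or.inr (Or.inl (tri132 _ _ _))))))
  · have e1 : p^0*q^0 = 1 := by ring
    have e2 : p^2*q^2 = p*p*(q*q) := by ring
    rw [e1, e2]
    exact Or.inr (Or.inr (Or.inl (rfl)))
  · have e1 : p^0*q^1 = q := by ring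
    have e2 : p^2*q^0 = p*p := by ring
    rw [e1, e2]
    exact Or.inr (Or.inr (Or.inr (Or.inr (Or.inr (Or.inr (Or.inr (rfl)))))))
  · have e1 : p^0*q^1 = q := by ring
    have e2 : p^0*q^0 = 1 := by ring
    have e3 : p^2*q^1 = p*p*q := by ring
    rw [e1, e2, e3]
    exact Or.inr (Or.inr (Or.inr (Or.inr (Or.inl (tri213 _ _ _)))))
  · have e1 : p^0*q^0 = 1 := by ring
    have e2 : p^0*q^1 = q := by ring
    have e3 : p^2*q^1 = p*p*q := by ring
    rw [e1, e2, e3]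
    exact Or.inr (Or.inr (Or.inr (Or.inr (Or.inl (rfl)))))
  · have e1 : p^1*q^2 = p*(q*q) := by ring
    have e2 : p^1*q^0 = p := by ring
    have e3 : p^0*q^0 = 1 := by ring
    rw [e1, e2, e3]
    exact Or.inr (Or.inr (Or.inr (Or.inl (tri321 _ _ _))))
  · have e1 : p^1*q^0 = p := by ring
    have e2 : p^1*q^2 = p*(q*q) := by ring
    have e3 : p^0*q^0 = 1 := by ring
    rw [e1, e2, e3]
    exact Or.inr (Or.inr (Or.inr (Or.inl (tri312 _ _ _))))
  · have e1 : p^1*q^0 = p := by ring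
    have e2 : p^0*q^2 = q*q := by ring
    rw [e1, e2]
    exact Or.inr (Or.inl (rfl))
  · have e1 : p^1*q^1 = p*q := by ring
    have e2 : p^0*q^0 = 1 := by ring
    rw [e1, e2]
    exact Or.inl (tri312 _ _ _)
  · have e1 : p^1*q^1 = p*q := by ring
    have e2 : p^1*q^0 = p := by ring
    have e3 : p^0*q^1 = q := by ring
    rw [e1, e2, e3]
    exact Or.inr (Or.inr (Or.inr (Or.inr (Or.inr (Or.inr (Or.inl (tri231 _ _ _)))))))
  · have e1 : p^1*q^0 = p := by ring
    have e2 : p^1*q^1 = p*q := by ring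
    have e3 : p^0*q^1 = q := by ring
    rw [e1, e2, e3]
    exact Or.inr (Or.inr (Or.inr (Or.inr (Or.inr (Or.inr (Or.inl (tri132 _ _ _)))))))
  · have e1 : p^1*q^2 = p*(q*q) := by ring
    have e2 : p^0*q^0 = 1 := by ring
    have e3 : p^1*q^0 = p := by ring
    rw [e1, e2, e3]
    exact Or.inr (Or.inr (Or.inr (Or.inl (tri231 _ _ _))))
  · have e1 : p^1*q^0 = p := by ring
    have e2 : p^0*q^2 = q*q := by ring
    rw [e1, e2]
    exact Or.inr (Or.inl (tri132 _ _ _))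
  · have e1 : p^1*q^0 = p := by ring
    have e2 : p^0*q^0 = 1 := by ring
    have e3 : p^1*q^2 = p*(q*q) := by ring
    rw [e1, e2, e3]
    exact Or.inr (Or.inr (Or.inr (Or.inl (tri213 _ _ _))))
  · have e1 : p^1*q^1 = p*q := by ring
    have e2 : p^0*q^1 = q := by ring
    have e3 : p^1*q^0 = p := by ring
    rw [e1, e2, e3]
    exact Or.inr (Or.inr (Or.inr (Or.inr (Or.inr (Or.inr (Or.inl (tri321 _ _ _)))))))
  · have e1 : p^1*q^1 = p*q := by ring
    have e2 : p^0*q^0 = 1 := by ring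
    rw [e1, e2]
    exact Or.inl (tri213 _ _ _)
  · have e1 : p^1*q^0 = p := by ring
    have e2 : p^0*q^1 = q := by ring
    have e3 : p^1*q^1 = p*q := by ring
    rw [e1, e2, e3]
    exact Or.inr (Or.inr (Or.inr (Or.inr (Or.inr (Or.inr (Or.inl (rfl)))))))
  · have e1 : p^0*q^2 = q*q := by ring
    have e2 : p^1*q^0 = p := by ring
    rw [e1, e2]
    exact Or.inr (Or.inl (tri231 _ _ _))
  · have e1 : p^0*q^0 = 1 := by ring
    have e2 : p^1*q^2 = p*(q*q) := by ring
    have e3 : p^1*q^0 = p := by ring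
    rw [e1, e2, e3]
    exact Or.inr (Or.inr (Or.inr (Or.inl (tri132 _ _ _))))
  · have e1 : p^0*q^0 = 1 := by ring
    have e2 : p^1*q^0 = p := by ring
    have e3 : p^1*q^2 = p*(q*q) := by ring
    rw [e1, e2, e3]
    exact Or.inr (Or.inr (Or.inr (Or.inl (rfl))))
  · have e1 : p^0*q^1 = q := by ring
    have e2 : p^1*q^1 = p*q := by ring
    have e3 : p^1*q^0 = p := by ring
    rw [e1, e2, e3]
    exact Or.inr (Or.inr (Or.inr (Or.inr (Or.inr (Or.inr (Or.inl (tri312 _ _ _)))))))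
  · have e1 : p^0*q^1 = q := by ring
    have e2 : p^1*q^0 = p := by ring
    have e3 : p^1*q^1 = p*q := by ring
    rw [e1, e2, e3]
    exact Or.inr (Or.inr (Or.inr (Or.inr (Or.inr (Or.inr (Or.inl (tri213 _ _ _)))))))
  · have e1 : p^0*q^0 = 1 := by ring
    have e2 : p^1*q^1 = p*q := by ring
    rw [e1, e2]
    exact Or.inl (rfl)


set_option maxHeartbeats 1600000 in
lemma key_s19 {p q : ℕ} (hp : p.Prime) (hq : q.Prime) (h2 : 2*p = q + 1)
    (s t : Multiset ℕ) (hs3 : Multiset.card s = 3) (ht3 : Multiset.card t = 3)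
    (hsp : s.prod = p^2*q^2) (htp : t.prod = p^2*q^2)
    (hsum : s.sum = t.sum) (hne : s ≠ t) :
    (s = {1, p*q, p*q} ∧ t = {p, p, q*q}) ∨ (s = {p, p, q*q} ∧ t = {1, p*q, p*q}) := by
  have hp2 : 2 ≤ p := hp.two_le
  have hpq : p ≠ q := by omega
  obtain ⟨r, hr1, hr2⟩ : ∃ r, p = r+2 ∧ q = 2*r+3 := ⟨p-2, by omega, by omega⟩
  subst hr1; subst hr2
  have c87 : (2*r+3) + ((2*r+3) + (r+2)*(r+2)) < (r+2) + ((2*r+3) + (r+2)*(2*r+3)) := by nlinarith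
  have c75 : (r+2) + ((2*r+3) + (r+2)*(2*r+3)) < 1 + ((r+2)*(2*r+3) + (r+2)*(2*r+3)) := by nlinarith
  have c56 : 1 + ((r+2)*(2*r+3) + (r+2)*(2*r+3)) = (r+2) + ((r+2) + (2*r+3)*(2*r+3)) := by ring
  have c54 : 1 + ((r+2)*(2*r+3) + (r+2)*(2*r+3)) < 1 + ((r+2)*(r+2) + (2*r+3)*(2*r+3)) := by nlinarith
  have c43 : 1 + ((r+2)*(r+2) + (2*r+3)*(2*r+3)) < 1 + ((2*r+3) + (r+2)*(r+2)*(2*r+3)) := by nlinarith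
  have c32 : 1 + ((2*r+3) + (r+2)*(r+2)*(2*r+3)) < 1 + ((r+2) + (r+2)*((2*r+3)*(2*r+3))) := by nlinarith
  have c21 : 1 + ((r+2) + (r+2)*((2*r+3)*(2*r+3))) < 1 + (1 + (r+2)*(r+2)*((2*r+3)*(2*r+3))) := by
    nlinarith
  rcases classify hp hq hpq s hs3 hsp with rfl|rfl|rfl|rfl|rfl|rfl|rfl|rfl <;>
    rcases classify hp hq hpq t ht3 htp with rfl|rfl|rfl|rfl|rfl|rfl|rfl|rfl <;>
      simp only [Multiset.insert_eq_cons, Multiset.sum_cons, Multiset.sum_singleton] at hsum <;>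
        first
          | exact absurd rfl hne
          | exact Or.inl ⟨rfl, rfl⟩
          | exact Or.inr ⟨rfl, rfl⟩
          | (exfalso; linarith [c87, c75, c56, c54, c43, c32, c21])

lemma ctn {p q : ℕ} (hp : p.Prime) (hq : q.Prime) (h2 : 2*p = q + 1) : IsCTN (p^2*q^2) := by
  have hp2 : 2 ≤ p := hp.two_le
  have hq2 : 2 ≤ q := hq.two_le
  have hqq : 4 ≤ q*q := Nat.mul_le_mul hq2 hq2
  constructor
  · refine ⟨{1, p*q, p*q}, {p, p, q*q}, by simp, by simp, ?_, ?_, by simp; ring, by simp; ring,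
      ?_, ?_⟩
    · intro x hx
      simp only [Multiset.insert_eq_cons, Multiset.mem_cons, Multiset.mem_singleton] at hx
      rcases hx with rfl | rfl | rfl
      · omega
      · exact Nat.mul_pos (by omega) (by omega)
      · exact Nat.mul_pos (by omega) (by omega)
    · intro x hx
      simp only [Multiset.insert_eq_cons, Multiset.mem_cons, Multiset.mem_singleton] at hx
      rcases hx with rfl | rfl | rfl
      · omega
      · omega
      · exact Nat.mul_pos (by omega) (by omega)
    · simp only [Multiset.insert_eq_cons, Multiset.sum_cons, Multiset.sum_singleton]
      have hc : p*q + p*q = q*q + q := by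
        calc p*q + p*q = (2*p)*q := by ring
        _ = (q+1)*q := by rw [h2]
        _ = q*q + q := by ring
      omega
    · intro hEq
      have h1 : (1:ℕ) ∈ ({p, p, q*q} : Multiset ℕ) := by
        rw [← hEq]; simp
      simp only [Multiset.insert_eq_cons, Multiset.mem_cons, Multiset.mem_singleton] at h1
      omega
  · rintro s t s' t' ⟨hs3, ht3, -, -, hsp, htp, hsum, hne⟩ ⟨hs3', ht3', -, -, hsp', htp', hsum', hne'⟩
    rcases key_s19 hp hq h2 s t hs3 ht3 hsp htp hsum hne with ⟨rfl, rfl⟩ | ⟨rfl, rfl⟩ <;>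
      rcases key_s19 hp hq h2 s' t' hs3' ht3' hsp' htp' hsum' hne' with ⟨rfl, rfl⟩ | ⟨rfl, rfl⟩ <;>
        first
          | exact Or.inl ⟨rfl, rfl⟩
          | exact Or.inr ⟨rfl, rfl⟩

theorem stmt19 (h : {p : ℕ | p.Prime ∧ (2 * p - 1).Prime}.Infinite) :
    {N : ℕ | IsCTN N}.Infinite := by
  have hsub : (fun p => p^2*(2*p-1)^2) '' {p : ℕ | p.Prime ∧ (2 * p - 1).Prime} ⊆
      {N : ℕ | IsCTN N} := by
    rintro N ⟨p, ⟨hp, hq⟩, rfl⟩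
    exact ctn hp hq (by have := hp.two_le; omega)
  have hinj : Set.InjOn (fun p => p^2*(2*p-1)^2) {p : ℕ | p.Prime ∧ (2 * p - 1).Prime} := by
    intro a ha b hb hab
    simp only at hab
    have ha2 : 2 ≤ a := ha.1.two_le
    have hb2 : 2 ≤ b := hb.1.two_le
    rw [← mul_pow, ← mul_pow] at hab
    have hab' : a * (2*a-1) = b * (2*b-1) := Nat.pow_left_injective (by norm_num) hab
    by_contra hne
    rcases Nat.lt_or_ge a b with hlt | hge
    · have : a * (2*a-1) < b * (2*b-1) :=
        Nat.mul_lt_mul_of_lt_of_le hlt (by omega) (by omega)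
      omega
    · have hlt : b < a := by omega
      have : b * (2*b-1) < a * (2*a-1) :=
        Nat.mul_lt_mul_of_lt_of_le hlt (by omega) (by omega)
      omega
  exact Set.Infinite.mono hsub (Set.Infinite.image hinj h)
end
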